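/- If G is a non-degenerate PCR over a PCS Σ and π : G → Ĝ is the canonical quotient onto its poc set quotient, then the dual map π° : Ĝ° → G° given by S ↦ π⁻¹(S) is a bijection. -/

import Mathlib

universe u v

structure PCS (α : Type*) where
  star : α → α
  zero : α
  star_star : ∀ a, star (star a) = a
  star_ne_self : ∀ a, star a ≠ a

variable {α : Type*}

/-- A pointed complemented relation (PCR) over the PCS `P`. -/
def IsPCR (P : PCS α) (G : Set (α × α)) : Prop :=
  (∀ a, (P.zero, a) ∈ G) ∧ ∀ a b, (a, b) ∈ G ↔ (P.star b, P.star a) ∈ G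

/-- `a ≤_G b`: the reflexive-transitive closure of the relation `G`. -/
def pcrLe (G : Set (α × α)) (a b : α) : Prop :=
  Relation.ReflTransGen (fun x y => (x, y) ∈ G) a b

/-- A set `S` is `G`-coherent if no `a, b ∈ S` satisfy `a ≤_G b*`. -/
def Coherent (P : PCS α) (G : Set (α × α)) (S : Set α) : Prop :=
  ∀ a ∈ S, ∀ b ∈ S, ¬ pcrLe G a (P.star b)

/-- Forward closure `↑S = {b | ∃ a ∈ S, a ≤_G b}`. -/
def upClosure (G : Set (α × α)) (S : Set α) : Set α :=
  {b | ∃ a ∈ S, pcrLe G a b}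

/-- Maximal `G`-coherent subsets; the members of the dual space `G°`. -/
def MaxCoherent (P : PCS α) (G : Set (α × α)) (S : Set α) : Prop :=
  Coherent P G S ∧ ∀ T, Coherent P G T → S ⊆ T → S = T

/-- `G` is non-degenerate: no `a` satisfies both `a ≤_G a*` and `a* ≤_G a`. -/
def Nondegenerate (P : PCS α) (G : Set (α × α)) : Prop :=
  ∀ a, ¬ (pcrLe G a (P.star a) ∧ pcrLe G (P.star a) a)

/-- A complete `*`-selection: exactly one of `a`, `a*` belongs to `S`, for each `a`. -/
def CompleteSel (P : PCS α) (S : Set α) : Prop :=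
  ∀ a, Xor' (a ∈ S) (P.star a ∈ S)

/-- The half-space `⟨S;G⟩ = {u ∈ G° : S ⊆ u}`. -/
def halfspace (P : PCS α) (G : Set (α × α)) (S : Set α) : Set (Set α) :=
  {u | MaxCoherent P G u ∧ S ⊆ u}

/-- Coherent projection `coh_G(T) = ↑T ∖ (↑T)*`. -/
def cohProj (P : PCS α) (G : Set (α × α)) (T : Set α) : Set α :=
  upClosure G T \ (P.star '' upClosure G T)

/-- Morphisms of PCRs. -/
def IsPCRHom {β : Type*} (P : PCS α) (Q : PCS β) (G : Set (α × α)) (H : Set (β × β))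
    (f : α → β) : Prop :=
  f P.zero = Q.zero ∧ (∀ a, f (P.star a) = Q.star (f a)) ∧
    ∀ a b, (a, b) ∈ G → pcrLe H (f a) (f b)

/-- A poc set: a PCR whose induced relation `≤_G` is antisymmetric and whose only
negligible element is `0`. -/
def IsPocSet (P : PCS α) (G : Set (α × α)) : Prop :=
  IsPCR P G ∧ (∀ a b, pcrLe G a b → pcrLe G b a → a = b) ∧
    ∀ a, pcrLe G a (P.star a) → a = P.zero


/-!
A maximal coherent set `U` of a non-degenerate PCR contains exactly one of `a`, `a*` for every
`a`, and never `0`; hence its membership predicate `a ↦ (a ∈ U)` is a morphism into the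
two-element poc set of truth values. By the universal property this predicate factors through
`π`, so `π` never identifies a point of `U` with a point outside `U`, and `π '' U` is coherent.
Thus `U ↦ π '' U` inverts `S ↦ π ⁻¹' S`; Zorn's lemma (coherence is a condition on pairs)
shows that `π ⁻¹' S` is maximal for every `S ∈ Ĝ°`.
-/

section PCR

variable {α β : Type*} {P : PCS α} {Q : PCS β} {G : Set (α × α)} {H : Set (β × β)}

theorem pcrLe_star (hG : IsPCR P G) {a b : α} (h : pcrLe G a b) :
    pcrLe G (P.star b) (P.star a) :=
  h.swap.lift P.star fun x y hxy => (hG.2 y x).1 hxy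

theorem pcrLe_star_comm (hG : IsPCR P G) {a b : α} :
    pcrLe G a (P.star b) ↔ pcrLe G b (P.star a) :=
  ⟨fun h => P.star_star b ▸ pcrLe_star hG h, fun h => P.star_star a ▸ pcrLe_star hG h⟩

theorem IsPCRHom.pcrLe {f : α → β} (hf : IsPCRHom P Q G H f) {a b : α} (h : pcrLe G a b) :
    pcrLe H (f a) (f b) :=
  h.lift' f hf.2.2

theorem Coherent.preimage {f : α → β} (hf : IsPCRHom P Q G H f) {S : Set β}
    (hS : Coherent Q H S) : Coherent P G (f ⁻¹' S) := fun _ ha b hb hab =>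
  hS _ ha _ hb (hf.2.1 b ▸ hf.pcrLe hab)

theorem Coherent.star_not_mem {S : Set α} (hS : Coherent P G S) {a : α} (ha : a ∈ S) :
    P.star a ∉ S := fun hs =>
  hS a ha _ hs (by rw [P.star_star]; exact .refl)

theorem Coherent.exists_maxCoherent_superset {T : Set α} (hT : Coherent P G T) :
    ∃ U, T ⊆ U ∧ MaxCoherent P G U := by
  obtain ⟨U, hTU, hU⟩ := zorn_subset_nonempty {S | Coherent P G S} (fun c hc hchain _ => by
    refine ⟨⋃₀ c, fun a ha b hb => ?_, fun s hs => Set.subset_sUnion_of_mem hs⟩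
    obtain ⟨s, hs, has⟩ := ha
    obtain ⟨t, ht, hbt⟩ := hb
    rcases hchain.total hs ht with hst | hts
    · exact hc ht a (hst has) b hbt
    · exact hc hs a has b (hts hbt)) T hT
  exact ⟨U, hTU, hU.prop, fun V hV hUV => hU.eq_of_subset hV hUV⟩

theorem MaxCoherent.zero_not_mem (hG : IsPCR P G) {U : Set α} (hU : MaxCoherent P G U) :
    P.zero ∉ U := fun h =>
  hU.1 _ h _ h (.single (hG.1 _))

theorem MaxCoherent.le_star_of_not_mem (hG : IsPCR P G) {U : Set α} (hU : MaxCoherent P G U)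
    {a : α} (ha : a ∉ U) : pcrLe G a (P.star a) ∨ ∃ u ∈ U, pcrLe G u (P.star a) := by
  by_contra! h
  have hcoh : Coherent P G (insert a U) := by
    rintro x (rfl | hx) y (rfl | hy) hxy
    · exact h.1 hxy
    · exact h.2 y hy ((pcrLe_star_comm hG).1 hxy)
    · exact h.2 x hx hxy
    · exact hU.1 x hx y hy hxy
  exact ha (hU.2 _ hcoh (Set.subset_insert a U) ▸ Set.mem_insert a U)

theorem MaxCoherent.star_mem_iff (hG : IsPCR P G) (hnd : Nondegenerate P G) {U : Set α}
    (hU : MaxCoherent P G U) {a : α} : P.star a ∈ U ↔ a ∉ U := by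
  refine ⟨fun hs ha => hU.1.star_not_mem ha hs, fun ha => ?_⟩
  by_contra hs
  have hs' := hU.le_star_of_not_mem hG hs
  rw [P.star_star] at hs'
  rcases hU.le_star_of_not_mem hG ha, hs' with
    ⟨hneg | ⟨u, hu, hua⟩, hcon | ⟨v, hv, hva⟩⟩
  · exact hnd a ⟨hneg, hcon⟩
  · exact hU.1 v hv v hv (hva.trans (hneg.trans (pcrLe_star hG hva)))
  · exact hU.1 u hu u hu (hua.trans (hcon.trans ((pcrLe_star_comm hG).1 hua)))
  · exact hU.1 u hu v hv (hua.trans (pcrLe_star hG hva))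

end PCR

section TruthValues

/-- The poc set `{0 < 0*}`, realised as the truth values `False < True` ordered by
implication. -/
def propPCS : PCS (ULift.{u} Prop) where
  star p := ⟨¬ p.down⟩
  zero := ⟨False⟩
  star_star _ := ULift.ext _ _ (propext not_not)
  star_ne_self _ h := not_iff_self (Iff.of_eq (congrArg ULift.down h))

def propRel : Set (ULift.{u} Prop × ULift.{u} Prop) :=
  {p | p.1.down → p.2.down}

theorem pcrLe_propRel_iff {p q : ULift.{u} Prop} : pcrLe propRel p q ↔ (p.down → q.down) := by
  refine ⟨fun h => ?_, fun h => .single h⟩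
  induction h with
  | refl => exact id
  | tail _ hqr ih => exact hqr ∘ ih

theorem isPocSet_propRel : IsPocSet propPCS.{u} propRel := by
  refine ⟨⟨fun _ => False.elim, fun _ _ => not_imp_not.symm⟩, fun p q hpq hqp => ?_, fun p h => ?_⟩
  · exact ULift.ext _ _ (propext ⟨pcrLe_propRel_iff.1 hpq, pcrLe_propRel_iff.1 hqp⟩)
  · exact ULift.ext _ _ (propext ⟨fun hp => pcrLe_propRel_iff.1 h hp hp, False.elim⟩)

variable {α : Type*} {P : PCS α} {G : Set (α × α)}

theorem MaxCoherent.isPCRHom_mem (hG : IsPCR P G) (hnd : Nondegenerate P G) {U : Set α}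
    (hU : MaxCoherent P G U) :
    IsPCRHom P propPCS.{u} G propRel fun a => ULift.up (a ∈ U) := by
  refine ⟨ULift.ext _ _ (propext (iff_false_intro (hU.zero_not_mem hG))),
    fun a => ULift.ext _ _ (propext (hU.star_mem_iff hG hnd)), fun a b hab => ?_⟩
  refine pcrLe_propRel_iff.2 fun ha => ?_
  by_contra hb
  exact hU.1 a ha _ ((hU.star_mem_iff hG hnd).2 hb) (by rw [P.star_star]; exact .single hab)

end TruthValues

section Factorisation

variable {α β : Type*} {P : PCS α} {Q : PCS β} {G : Set (α × α)} {H : Set (β × β)}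
  {π : α → β} {U : Set α} {g : β → ULift.{u} Prop}

theorem preimage_image_eq_of_mem_factor (hfac : (fun a => ULift.up (a ∈ U)) = g ∘ π) :
    π ⁻¹' (π '' U) = U := by
  refine (Set.subset_preimage_image π U).antisymm' fun a ⟨u, hu, hua⟩ => ?_
  simp only [funext_iff, Function.comp_apply] at hfac
  have hau : ULift.up (a ∈ U) = ULift.up (u ∈ U) := by rw [hfac, hfac, hua]
  exact (congrArg ULift.down hau).mpr hu

theorem coherent_image_of_mem_factor (hπ : IsPCRHom P Q G H π) (hU : Coherent P G U)
    (hg : IsPCRHom Q propPCS H propRel g) (hfac : (fun a => ULift.up (a ∈ U)) = g ∘ π) :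
    Coherent Q H (π '' U) := by
  rintro _ ⟨a, ha, rfl⟩ _ ⟨b, hb, rfl⟩ hab
  rw [← hπ.2.1] at hab
  have hmem := pcrLe_propRel_iff.1 (hg.pcrLe hab)
  simp only [funext_iff, Function.comp_apply] at hfac
  simp only [← hfac] at hmem
  exact hU.star_not_mem hb (hmem ha)

theorem maxCoherent_image (hπ : IsPCRHom P Q G H π) (hsurj : Function.Surjective π)
    (hU : MaxCoherent P G U) (himg : Coherent Q H (π '' U)) : MaxCoherent Q H (π '' U) := by
  refine ⟨himg, fun T hT hUT => hUT.antisymm ?_⟩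
  have hpre : U = π ⁻¹' T := hU.2 _ (hT.preimage hπ) (Set.image_subset_iff.1 hUT)
  rw [hpre, Set.image_preimage_eq T hsurj]

end Factorisation

theorem stmt5_general {α : Type u} {β : Type u} (P : PCS α) (Q : PCS β)
    (G : Set (α × α)) (H : Set (β × β)) (hG : IsPCR P G) (hnd : Nondegenerate P G)
    (π : α → β) (hπ : IsPCRHom P Q G H π)
    (hsurj : Function.Surjective π)
    (huniv : ∀ (γ : Type u) (R : PCS γ) (K : Set (γ × γ)), IsPocSet R K →
      ∀ f : α → γ, IsPCRHom P R G K f →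
        ∃! g : β → γ, IsPCRHom Q R H K g ∧ f = g ∘ π) :
    Set.BijOn (fun S : Set β => π ⁻¹' S)
      {S | MaxCoherent Q H S} {S | MaxCoherent P G S} := by
  have hfactor : ∀ U, MaxCoherent P G U → Coherent Q H (π '' U) ∧ π ⁻¹' (π '' U) = U := by
    intro U hU
    obtain ⟨g, ⟨hg, hfac⟩, -⟩ :=
      huniv _ propPCS propRel isPocSet_propRel _ (hU.isPCRHom_mem hG hnd)
    exact ⟨coherent_image_of_mem_factor hπ hU.1 hg hfac, preimage_image_eq_of_mem_factor hfac⟩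
  refine ⟨fun S hS => ⟨hS.1.preimage hπ, fun T hT hST => ?_⟩,
    (Set.preimage_injective.2 hsurj).injOn,
    fun U hU => ⟨π '' U, maxCoherent_image hπ hsurj hU (hfactor U hU).1, (hfactor U hU).2⟩⟩
  obtain ⟨U, hTU, hU⟩ := hT.exists_maxCoherent_superset
  have hSU : S = π '' U := hS.2 _ (hfactor U hU).1 fun s hs =>
    let ⟨a, ha⟩ := hsurj s
    ⟨a, hTU (hST (show π a ∈ S from ha ▸ hs)), ha⟩
  exact hST.antisymm (hTU.trans (hSU ▸ (hfactor U hU).2.ge))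

/-- The dual map of the canonical poc quotient is a bijection of dual spaces. -/
theorem stmt5 {α : Type u} {β : Type u} (P : PCS α) (Q : PCS β)
    (G : Set (α × α)) (H : Set (β × β)) (hG : IsPCR P G) (hnd : Nondegenerate P G)
    (hQ : IsPocSet Q H) (π : α → β) (hπ : IsPCRHom P Q G H π)
    (hsurj : Function.Surjective π)
    (huniv : ∀ (γ : Type u) (R : PCS γ) (K : Set (γ × γ)), IsPocSet R K →
      ∀ f : α → γ, IsPCRHom P R G K f →
        ∃! g : β → γ, IsPCRHom Q R H K g ∧ f = g ∘ π) :
    Set.BijOn (fun S : Set β => π ⁻¹' S)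
      {S | MaxCoherent Q H S} {S | MaxCoherent P G S} :=
  stmt5_general P Q G H hG hnd π hπ hsurj huniv
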